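/- Let f : ℝ → ℝ be continuous and nondecreasing, and let u ∈ C²(ℝⁿ) satisfy ℐu(x) = f(u(x)) for every x ∈ ℝⁿ. Assume that |u(x)| ≤ K(1 + |x|^κ) for all x ∈ ℝⁿ, for some K ≥ 0 and κ ∈ [0, 2s). Then f(u(x)) = 0 for every x ∈ ℝⁿ, and consequently ℐu(x) = 0 for every x ∈ ℝⁿ. -/

import Mathlib

/-!
Perturb `u` by the barrier `φ(x) = (1 + ‖x‖²)^β` with `κ < 2β < 2s`. Since `u` grows more slowly
than `φ`, `u - εφ` attains its maximum at some `x_ε`; there the second differences of `u` are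
dominated by those of `εφ`, which concavity of `t ↦ t^β` bounds by `2ε min(|r|², |r|^{2β})`, a
function integrable against `|r|^{-1-2s}`. Monotonicity of `f` then gives
`f(u(x₀) - εφ(x₀)) ≤ f(u(x_ε)) = ℐu(x_ε) ≤ Cε`, and `ε → 0` yields `f(u) ≤ 0`. The same argument
for `-u` and `t ↦ -f(-t)` yields `f(u) ≥ 0`.
-/

open MeasureTheory
open scoped RealInnerProductSpace

/-- The anisotropic integro-differential operator
`ℐu(x) = ∫_{S^{n-1} × ℝ} (u(x + rϑ) + u(x − rϑ) − 2u(x)) dμ(ϑ) dr / |r|^{1+2s}`. -/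
noncomputable def opI (n : ℕ) (s : ℝ)
    (μ : Measure (Metric.sphere (0 : EuclideanSpace ℝ (Fin n)) 1))
    (u : EuclideanSpace ℝ (Fin n) → ℝ) (x : EuclideanSpace ℝ (Fin n)) : ℝ :=
  ∫ p : Metric.sphere (0 : EuclideanSpace ℝ (Fin n)) 1 × ℝ,
    (u (x + p.2 • (p.1 : EuclideanSpace ℝ (Fin n))) +
      u (x - p.2 • (p.1 : EuclideanSpace ℝ (Fin n))) - 2 * u x) / |p.2| ^ (1 + 2 * s)
    ∂(μ.prod volume)

open Set Filter
open scoped Topology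

lemma rpow_add_sub_rpow_le_min {β c d : ℝ} (hβ₀ : 0 ≤ β) (hβ₁ : β ≤ 1) (hc : 1 ≤ c)
    (hd : 0 ≤ d) : (c + d) ^ β - c ^ β ≤ min d (d ^ β) := by
  have hc₀ : 0 < c := by linarith
  refine le_min ?_ (by linarith [Real.rpow_add_le_add_rpow hc₀.le hd hβ₀ hβ₁])
  have bernoulli : (1 + d / c) ^ β ≤ 1 + β * (d / c) :=
    rpow_one_add_le_one_add_mul_self (by linarith [div_nonneg hd hc₀.le]) hβ₀ hβ₁
  calc (c + d) ^ β - c ^ β = c ^ β * ((1 + d / c) ^ β - 1) := by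
        rw [mul_sub, ← Real.mul_rpow hc₀.le (by positivity), mul_one, mul_add, mul_one,
          mul_div_cancel₀ _ hc₀.ne']
    _ ≤ c ^ β * (d / c) := by
        gcongr
        linarith [mul_le_of_le_one_left (div_nonneg hd hc₀.le) hβ₁]
    _ ≤ c * (d / c) := by gcongr; exact Real.rpow_le_self_of_one_le hc hβ₁
    _ = d := by field_simp

lemma rpow_add_rpow_sub_two_mul_rpow_le {β a b c d : ℝ} (hβ₀ : 0 ≤ β) (hβ₁ : β ≤ 1)
    (ha : 0 ≤ a) (hb : 0 ≤ b) (hc : 1 ≤ c) (hd : 0 ≤ d) (hab : a + b = 2 * (c + d)) :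
    a ^ β + b ^ β - 2 * c ^ β ≤ 2 * min d (d ^ β) := by
  have midpoint :
      (1 / 2 : ℝ) • a ^ β + (1 / 2 : ℝ) • b ^ β ≤ ((1 / 2 : ℝ) • a + (1 / 2 : ℝ) • b) ^ β :=
    (Real.concaveOn_rpow hβ₀ hβ₁).2 ha hb (by norm_num) (by norm_num) (by norm_num)
  have hmid : (1 / 2 : ℝ) • a + (1 / 2 : ℝ) • b = c + d := by simp only [smul_eq_mul]; linarith
  rw [hmid, smul_eq_mul, smul_eq_mul] at midpoint
  linarith [rpow_add_sub_rpow_le_min hβ₀ hβ₁ hc hd]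

lemma tendsto_mul_rpow_sub_mul_rpow_atBot {a b K ε : ℝ} (hab : a < b) (hb : 0 < b) (hε : 0 < ε) :
    Tendsto (fun t : ℝ => K * t ^ a - ε * t ^ b) atTop atBot := by
  have hfactor : Tendsto (fun t : ℝ => K * t ^ (a - b) - ε) atTop (𝓝 (K * 0 - ε)) :=
    ((tendsto_rpow_neg_atTop (sub_pos.2 hab)).const_mul K).sub_const ε |>.congr fun t => by
      rw [neg_sub]
  refine ((tendsto_rpow_atTop hb).atTop_mul_neg (by linarith) hfactor).congr' ?_
  filter_upwards [eventually_gt_atTop 0] with t ht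
  rw [mul_sub, ← mul_assoc, mul_comm (t ^ b) K, mul_assoc, ← Real.rpow_add ht, add_sub_cancel]
  ring

lemma integrable_of_integrableOn_Ioi_of_even {F : Type*} [NormedAddCommGroup F] {g : ℝ → F}
    (hg : IntegrableOn g (Ioi 0)) (heven : ∀ r, g (-r) = g r) : Integrable g := by
  have hIio : IntegrableOn g (Iio 0) := by
    have := (MeasurePreserving.integrableOn_comp_preimage
      (Measure.measurePreserving_neg (volume : Measure ℝ))
      (Homeomorph.neg ℝ).measurableEmbedding (f := g) (s := Ioi 0)).2 hg
    simpa [Function.comp_def, heven] using this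
  rw [← integrableOn_univ, ← Iic_union_Ioi (a := (0 : ℝ))]
  exact ((integrableOn_Iic_iff_integrableOn_Iio (f := g)).2 hIio).union hg

lemma integrable_min_rpow_div_rpow {a b c : ℝ} (ha : c - 1 < a) (hb : b < c - 1) :
    Integrable fun r : ℝ => min (|r| ^ a) (|r| ^ b) / |r| ^ c := by
  refine integrable_of_integrableOn_Ioi_of_even ?_ (by simp)
  have hmeas : AEStronglyMeasurable (fun r : ℝ => min (|r| ^ a) (|r| ^ b) / |r| ^ c) :=
    (by fun_prop : Measurable fun r : ℝ => min (|r| ^ a) (|r| ^ b) / |r| ^ c).aestronglyMeasurable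
  have hbound : ∀ p, ∀ r ∈ Ioi (0 : ℝ), min (|r| ^ a) (|r| ^ b) ≤ |r| ^ p →
      ‖min (|r| ^ a) (|r| ^ b) / |r| ^ c‖ ≤ r ^ (p - c) := fun p r (hr : 0 < r) hle => by
    rw [abs_of_pos hr] at hle ⊢
    rw [Real.rpow_sub hr, Real.norm_of_nonneg (by positivity)]
    gcongr
  have hnear : IntegrableOn (fun r : ℝ => min (|r| ^ a) (|r| ^ b) / |r| ^ c) (Ioc 0 1) := by
    have hpow : IntegrableOn (fun r : ℝ => r ^ (a - c)) (Ioc 0 1) :=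
      (integrableOn_Ioc_iff_integrableOn_Ioo (f := fun r : ℝ => r ^ (a - c))).2
        ((intervalIntegral.integrableOn_Ioo_rpow_iff zero_lt_one).2 (by linarith))
    refine hpow.mono' hmeas.restrict
      ((ae_restrict_iff' measurableSet_Ioc).2 (ae_of_all _ fun r hr => ?_))
    exact hbound a r hr.1 (min_le_left _ _)
  have hfar : IntegrableOn (fun r : ℝ => min (|r| ^ a) (|r| ^ b) / |r| ^ c) (Ioi 1) := by
    have hpow : IntegrableOn (fun r : ℝ => r ^ (b - c)) (Ioi 1) :=
      integrableOn_Ioi_rpow_of_lt (by linarith) zero_lt_one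
    refine hpow.mono' hmeas.restrict
      ((ae_restrict_iff' measurableSet_Ioi).2 (ae_of_all _ fun r hr => ?_))
    exact hbound b r (zero_lt_one.trans (mem_Ioi.1 hr)) (min_le_right _ _)
  rw [← Ioc_union_Ioi_eq_Ioi zero_le_one]
  exact hnear.union hfar

lemma Continuous.apply_le_zero_of_forall_sub_mul_le {f : ℝ → ℝ} (hf : Continuous f)
    {a b D : ℝ} (h : ∀ ε > 0, f (a - ε * b) ≤ ε * D) : f a ≤ 0 := by
  have hleft : Tendsto (fun ε => f (a - ε * b)) (𝓝[>] 0) (𝓝 (f a)) :=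
    ((hf.comp (by fun_prop)).tendsto' 0 _ (by simp)).mono_left nhdsWithin_le_nhds
  have hright : Tendsto (fun ε => ε * D) (𝓝[>] 0) (𝓝 0) :=
    ((continuous_id.mul continuous_const).tendsto' 0 0 (by simp)).mono_left nhdsWithin_le_nhds
  exact le_of_tendsto_of_tendsto hleft hright (eventually_nhdsWithin_of_forall h)

section Barrier

variable {E : Type*} [NormedAddCommGroup E]

noncomputable def barrier (β : ℝ) (x : E) : ℝ := (1 + ‖x‖ ^ 2) ^ β

lemma barrier_nonneg (β : ℝ) (x : E) : 0 ≤ barrier β x := by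
  unfold barrier; positivity

lemma continuous_barrier {β : ℝ} (hβ : 0 ≤ β) : Continuous (barrier β : E → ℝ) :=
  (continuous_const.add (continuous_norm.pow 2)).rpow_const fun _ => Or.inr hβ

lemma norm_rpow_le_barrier {β : ℝ} (hβ : 0 ≤ β) (x : E) : ‖x‖ ^ (2 * β) ≤ barrier β x := by
  rw [barrier, Real.rpow_mul (norm_nonneg x), Real.rpow_two]
  gcongr
  linarith

lemma exists_forall_sub_mul_barrier_le [ProperSpace E] {u : E → ℝ} (hu : Continuous u)
    {K κ β ε : ℝ} (hβ : 0 < β) (hκβ : κ < 2 * β) (hε : 0 < ε)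
    (hgrowth : ∀ x, u x ≤ K * (1 + ‖x‖ ^ κ)) :
    ∃ x, ∀ y, u y - ε * barrier β y ≤ u x - ε * barrier β x := by
  refine (hu.sub (continuous_const.mul (continuous_barrier hβ.le))).exists_forall_ge ?_
  have hlim := tendsto_atBot_add_const_left _ K
    (tendsto_mul_rpow_sub_mul_rpow_atBot (K := K) hκβ (by linarith) hε)
  refine tendsto_atBot_mono (fun y => ?_) (hlim.comp tendsto_norm_cocompact_atTop)
  have := mul_le_mul_of_nonneg_left (norm_rpow_le_barrier hβ.le y) hε.le
  change u y - ε * barrier β y ≤ K + (K * ‖y‖ ^ κ - ε * ‖y‖ ^ (2 * β))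
  linarith [hgrowth y]

variable [InnerProductSpace ℝ E]

lemma barrier_add_add_barrier_sub_le {β : ℝ} (hβ₀ : 0 ≤ β) (hβ₁ : β ≤ 1) (x y : E) :
    barrier β (x + y) + barrier β (x - y) - 2 * barrier β x ≤
      2 * min (‖y‖ ^ (2 : ℝ)) (‖y‖ ^ (2 * β)) := by
  rw [Real.rpow_mul (norm_nonneg y), Real.rpow_two]
  refine rpow_add_rpow_sub_two_mul_rpow_le hβ₀ hβ₁ (by positivity) (by positivity)
    (by nlinarith [sq_nonneg ‖x‖]) (by positivity) ?_
  rw [norm_add_sq_real, norm_sub_sq_real]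
  ring

end Barrier

section Operator

variable {n : ℕ} {s : ℝ} {μ : Measure (Metric.sphere (0 : EuclideanSpace ℝ (Fin n)) 1)}

lemma opI_neg (u : EuclideanSpace ℝ (Fin n) → ℝ) (x : EuclideanSpace ℝ (Fin n)) :
    opI n s μ (-u) x = -opI n s μ u x := by
  rw [opI, opI, ← integral_neg]
  congr 1 with p
  simp only [Pi.neg_apply]
  ring

lemma opI_le_of_le [IsFiniteMeasure μ] {u : EuclideanSpace ℝ (Fin n) → ℝ}
    {x : EuclideanSpace ℝ (Fin n)} {g : ℝ → ℝ} (hg : Integrable g) (hg₀ : 0 ≤ g)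
    (hle : ∀ (ϑ : Metric.sphere (0 : EuclideanSpace ℝ (Fin n)) 1) (r : ℝ),
      (u (x + r • (ϑ : EuclideanSpace ℝ (Fin n))) + u (x - r • (ϑ : EuclideanSpace ℝ (Fin n)))
        - 2 * u x) / |r| ^ (1 + 2 * s) ≤ g r) :
    opI n s μ u x ≤ μ.real univ * ∫ r, g r := by
  rw [← smul_eq_mul, ← integral_fun_snd]
  by_cases hint : Integrable (fun p : Metric.sphere (0 : EuclideanSpace ℝ (Fin n)) 1 × ℝ =>
      (u (x + p.2 • (p.1 : EuclideanSpace ℝ (Fin n))) +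
        u (x - p.2 • (p.1 : EuclideanSpace ℝ (Fin n))) - 2 * u x) / |p.2| ^ (1 + 2 * s))
      (μ.prod volume)
  · exact integral_mono hint (hg.comp_snd μ) fun p => hle p.1 p.2
  -- a non-integrable integrand makes `opI` the junk value `0`
  · rw [opI, integral_undef hint]
    exact integral_nonneg fun p => hg₀ p.2

lemma opI_le_of_forall_sub_mul_barrier_le [IsFiniteMeasure μ] (hs : s < 1) {β ε : ℝ}
    (hβ₀ : 0 ≤ β) (hβs : β < s) (hε : 0 ≤ ε) {u : EuclideanSpace ℝ (Fin n) → ℝ}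
    {x : EuclideanSpace ℝ (Fin n)} (hx : ∀ y, u y - ε * barrier β y ≤ u x - ε * barrier β x) :
    opI n s μ u x ≤
      ε * (2 * μ.real univ * ∫ r, min (|r| ^ (2 : ℝ)) (|r| ^ (2 * β)) / |r| ^ (1 + 2 * s)) := by
  have hkernel : Integrable fun r : ℝ => min (|r| ^ (2 : ℝ)) (|r| ^ (2 * β)) / |r| ^ (1 + 2 * s) :=
    integrable_min_rpow_div_rpow (by linarith) (by linarith)
  calc opI n s μ u x
      ≤ μ.real univ * ∫ r, 2 * ε * (min (|r| ^ (2 : ℝ)) (|r| ^ (2 * β)) / |r| ^ (1 + 2 * s)) := by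
        refine opI_le_of_le (hkernel.const_mul _) (fun r => by positivity) fun ϑ r => ?_
        have hbarrier := barrier_add_add_barrier_sub_le hβ₀ (by linarith) x
          (r • (ϑ : EuclideanSpace ℝ (Fin n)))
        rw [norm_smul, norm_eq_of_mem_sphere ϑ, mul_one, Real.norm_eq_abs] at hbarrier
        rw [← mul_div_assoc]
        gcongr
        nlinarith [hx (x + r • (ϑ : EuclideanSpace ℝ (Fin n))),
          hx (x - r • (ϑ : EuclideanSpace ℝ (Fin n)))]
    _ = _ := by rw [integral_const_mul]; ring

theorem comp_le_zero_of_opI_eq_comp [IsFiniteMeasure μ] (hs : s ∈ Ioo (0 : ℝ) 1)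
    {f : ℝ → ℝ} (hf_cont : Continuous f) (hf_mono : Monotone f)
    {u : EuclideanSpace ℝ (Fin n) → ℝ} (hu : Continuous u) (heq : ∀ x, opI n s μ u x = f (u x))
    {K κ : ℝ} (hκ : κ < 2 * s) (hgrowth : ∀ x, u x ≤ K * (1 + ‖x‖ ^ κ))
    (x₀ : EuclideanSpace ℝ (Fin n)) : f (u x₀) ≤ 0 := by
  obtain ⟨β, hβ, hβs⟩ : ∃ β, max 0 (κ / 2) < β ∧ β < s :=
    exists_between (max_lt hs.1 (by linarith))
  obtain ⟨hβ₀, hκβ⟩ : 0 < β ∧ κ < 2 * β := by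
    rw [max_lt_iff] at hβ
    exact ⟨hβ.1, by linarith [hβ.2]⟩
  apply hf_cont.apply_le_zero_of_forall_sub_mul_le (b := barrier β x₀)
  intro ε hε
  obtain ⟨x, hx⟩ := exists_forall_sub_mul_barrier_le hu hβ₀ hκβ hε hgrowth
  calc f (u x₀ - ε * barrier β x₀) ≤ f (u x) :=
        hf_mono (by linarith [hx x₀, mul_nonneg hε.le (barrier_nonneg β x)])
    _ = opI n s μ u x := (heq x).symm
    _ ≤ _ := opI_le_of_forall_sub_mul_barrier_le hs.2 hβ₀.le hβs hε.le hx

end Operator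

theorem nonlinearity_vanishes_of_subcritical_growth_general
    (n : ℕ) (s : ℝ) (hs : s ∈ Set.Ioo (0 : ℝ) 1)
    (μ : Measure (Metric.sphere (0 : EuclideanSpace ℝ (Fin n)) 1)) [IsFiniteMeasure μ]
    (f : ℝ → ℝ) (hf_cont : Continuous f) (hf_mono : Monotone f)
    (u : EuclideanSpace ℝ (Fin n) → ℝ) (hu : ContDiff ℝ 2 u)
    (heq : ∀ x, opI n s μ u x = f (u x))
    (K κ : ℝ) (hκ : κ < 2 * s)
    (hgrowth : ∀ x, |u x| ≤ K * (1 + ‖x‖ ^ κ)) :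
    (∀ x, f (u x) = 0) ∧ (∀ x, opI n s μ u x = 0) := by
  have hle := comp_le_zero_of_opI_eq_comp hs hf_cont hf_mono hu.continuous heq hκ
    fun x => (le_abs_self _).trans (hgrowth x)
  have hge := comp_le_zero_of_opI_eq_comp hs (μ := μ) (f := fun t => -f (-t)) (by fun_prop)
    (fun a b hab => neg_le_neg (hf_mono (neg_le_neg hab))) hu.continuous.neg
    (fun x => by simp [opI_neg, heq x]) hκ fun x => (neg_le_abs _).trans (hgrowth x)
  have hzero : ∀ x, f (u x) = 0 := fun x => le_antisymm (hle x) (by simpa using hge x)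
  exact ⟨hzero, fun x => (heq x).trans (hzero x)⟩

/-- If `f` is continuous and nondecreasing, `u ∈ C²(ℝⁿ)` solves `ℐu = f(u)` in `ℝⁿ`,
and `|u(x)| ≤ K(1+|x|^κ)` with `κ ∈ [0,2s)`, then `f(u) ≡ 0` and hence `ℐu ≡ 0`. -/
theorem nonlinearity_vanishes_of_subcritical_growth
    (n : ℕ) (hn : 1 ≤ n) (s : ℝ) (hs : s ∈ Set.Ioo (0 : ℝ) 1)
    (μ : Measure (Metric.sphere (0 : EuclideanSpace ℝ (Fin n)) 1)) [IsFiniteMeasure μ]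
    (lam Λ : ℝ) (hlam : 0 < lam) (hΛ : 0 < Λ)
    (hnondeg : ∀ ν : Metric.sphere (0 : EuclideanSpace ℝ (Fin n)) 1,
      lam ≤ ∫ ϑ : Metric.sphere (0 : EuclideanSpace ℝ (Fin n)) 1,
        |⟪(ν : EuclideanSpace ℝ (Fin n)), (ϑ : EuclideanSpace ℝ (Fin n))⟫| ^ (2 * s) ∂μ)
    (hμΛ : μ Set.univ ≤ ENNReal.ofReal Λ)
    (f : ℝ → ℝ) (hf_cont : Continuous f) (hf_mono : Monotone f)
    (u : EuclideanSpace ℝ (Fin n) → ℝ) (hu : ContDiff ℝ 2 u)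
    (heq : ∀ x, opI n s μ u x = f (u x))
    (K κ : ℝ) (hK : 0 ≤ K) (hκ0 : 0 ≤ κ) (hκ : κ < 2 * s)
    (hgrowth : ∀ x, |u x| ≤ K * (1 + ‖x‖ ^ κ)) :
    (∀ x, f (u x) = 0) ∧ (∀ x, opI n s μ u x = 0) :=
  nonlinearity_vanishes_of_subcritical_growth_general n s hs μ f hf_cont hf_mono u hu heq K κ hκ
    hgrowth
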